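/- Let S be an ordered semigroup with real multiplication satisfying axioms O1–O5. If f, g, h ∈ S are such that f + h ≤ g + h and h ∝ g (i.e., h ≤ n g for some n ∈ ℕ), then f ≤ g. -/

import Mathlib

open scoped ENNReal

/-- `CC s t` : `s` is (sequentially) compactly contained in `t`, written `s ≪ t`. -/
def CC {S : Type*} [AddCommMonoid S] [PartialOrder S] (s t : S) : Prop :=
  ∀ u : ℕ → S, Monotone u → ∀ x : S, IsLUB (Set.range u) x → t ≤ x → ∃ n, s ≤ u n

/-- An ordered semigroup (positive, with translation invariant order) satisfying axioms O1-O5. -/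
structure CuO5 (S : Type*) [AddCommMonoid S] [PartialOrder S] : Prop where
  addRightMono : ∀ {s t : S}, s ≤ t → ∀ r : S, s + r ≤ t + r
  zeroLe : ∀ s : S, 0 ≤ s
  O1 : ∀ u : ℕ → S, Monotone u → ∃ x : S, IsLUB (Set.range u) x
  O2 : ∀ s : S, ∃ u : ℕ → S, (∀ n, CC (u n) (u (n + 1))) ∧ IsLUB (Set.range u) s
  O3 : ∀ {s₁ t₁ s₂ t₂ : S}, CC s₁ t₁ → CC s₂ t₂ → CC (s₁ + s₂) (t₁ + t₂)
  O4 : ∀ u v : ℕ → S, Monotone u → Monotone v → ∀ x y : S,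
    IsLUB (Set.range u) x → IsLUB (Set.range v) y →
    IsLUB (Set.range fun n => u n + v n) (x + y)
  O5 : ∀ {s' s t : S}, CC s' s → s ≤ t → ∃ r : S, s' + r ≤ t ∧ t ≤ s + r

/-- Axioms O1-O6. -/
structure CuO6 (S : Type*) [AddCommMonoid S] [PartialOrder S] extends CuO5 S : Prop where
  O6 : ∀ {s r t : S}, s ≤ r + t → ∀ {s' : S}, CC s' s →
    ∃ r' t' : S, s' ≤ r' + t' ∧ r' ≤ r ∧ r' ≤ s ∧ t' ≤ t ∧ t' ≤ s

/-- A functional on `S`: additive, order preserving, zero preserving map to `[0,∞]`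
preserving suprema of increasing sequences. -/
structure IsFunctional {S : Type*} [AddCommMonoid S] [PartialOrder S] (l : S → ℝ≥0∞) : Prop where
  map_zero : l 0 = 0
  map_add : ∀ s t : S, l (s + t) = l s + l t
  mono : ∀ {s t : S}, s ≤ t → l s ≤ l t
  map_sup : ∀ u : ℕ → S, Monotone u → ∀ x : S, IsLUB (Set.range u) x → l x = ⨆ n, l (u n)

/-- Real multiplication on `S` : a map `(0,∞] × S → S` additive, order preserving and
sup-(of increasing sequences)-preserving in each variable, with `1 · s = s`.
Scalars are elements of `ℝ≥0∞` required to be positive. -/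
structure RealMul (S : Type*) [AddCommMonoid S] [PartialOrder S] where
  smul : ℝ≥0∞ → S → S
  add_left : ∀ {a b : ℝ≥0∞}, 0 < a → 0 < b → ∀ s : S, smul (a + b) s = smul a s + smul b s
  add_right : ∀ {a : ℝ≥0∞}, 0 < a → ∀ s t : S, smul a (s + t) = smul a s + smul a t
  mono_left : ∀ {a b : ℝ≥0∞}, 0 < a → a ≤ b → ∀ s : S, smul a s ≤ smul b s
  mono_right : ∀ {a : ℝ≥0∞}, 0 < a → ∀ {s t : S}, s ≤ t → smul a s ≤ smul a t
  sup_left : ∀ u : ℕ → ℝ≥0∞, Monotone u → 0 < u 0 → ∀ s : S,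
    IsLUB (Set.range fun n => smul (u n) s) (smul (⨆ n, u n) s)
  sup_right : ∀ {a : ℝ≥0∞}, 0 < a → ∀ u : ℕ → S, Monotone u → ∀ x : S,
    IsLUB (Set.range u) x → IsLUB (Set.range fun n => smul a (u n)) (smul a x)
  one_smul : ∀ s : S, smul 1 s = s

/-- `D` is a dense subset of `S`: every element of `S` is the supremum of a rapidly
increasing sequence of elements of `D`. -/
def IsDenseSub {S : Type*} [AddCommMonoid S] [PartialOrder S] (D : Set S) : Prop :=
  ∀ s : S, ∃ u : ℕ → S, (∀ n, u n ∈ D) ∧ (∀ n, CC (u n) (u (n + 1))) ∧ IsLUB (Set.range u) s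

/-- `m` is the least upper bound of the functionals `l₁` and `l₂` in `F(S)`
(pointwise order). -/
def IsFSup {S : Type*} [AddCommMonoid S] [PartialOrder S] (l₁ l₂ m : S → ℝ≥0∞) : Prop :=
  IsFunctional m ∧ (∀ s, l₁ s ≤ m s) ∧ (∀ s, l₂ s ≤ m s) ∧
    ∀ d : S → ℝ≥0∞, IsFunctional d → (∀ s, l₁ s ≤ d s) → (∀ s, l₂ s ≤ d s) → ∀ s, m s ≤ d s

/-- `m` is the greatest lower bound of the functionals `l₁` and `l₂` in `F(S)`
(pointwise order). -/
def IsFInf {S : Type*} [AddCommMonoid S] [PartialOrder S] (l₁ l₂ m : S → ℝ≥0∞) : Prop :=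
  IsFunctional m ∧ (∀ s, m s ≤ l₁ s) ∧ (∀ s, m s ≤ l₂ s) ∧
    ∀ d : S → ℝ≥0∞, IsFunctional d → (∀ s, d s ≤ l₁ s) → (∀ s, d s ≤ l₂ s) → ∀ s, d s ≤ m s

/-- An isomorphism of ordered semigroups between `S` and the extended natural numbers. -/
def IsOrdSemigroupIso {S : Type*} [AddCommMonoid S] [PartialOrder S] (e : S ≃ ℕ∞) : Prop :=
  (∀ a b : S, e (a + b) = e a + e b) ∧ e 0 = 0 ∧ ∀ a b : S, a ≤ b ↔ e a ≤ e b

/-!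
From `f + h ≤ g + h` one gets `m • f + h ≤ m • g + h` for every `m`, hence `m • f ≤ (m + n) • g`
when `h ≤ n • g`: the defect of `f` over `g` is bounded independently of `m`. Real
multiplication turns this into `f' ≤ g` for every `f'` below some `(a / (a + 1)) • f`: taking
`m = a n + 1`, one finds `(a + 1) m • f' ≤ a m • f ≤ a (m + n) • g ≤ (a + 1) m • g` and divides by
`(a + 1) m`. Since `f = sup_a (a / (a + 1)) • f`, every `f' ≪ f` is of this kind, and `f` is the
supremum of such elements by (O2).
-/

open Filter Topology
open scoped NNReal

section

variable {S : Type*} [AddCommMonoid S] [PartialOrder S]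

theorem CC.trans_le {s t t' : S} (h : CC s t) (ht : t ≤ t') : CC s t' :=
  fun u hu x hx ht'x => h u hu x hx (ht.trans ht'x)

namespace CuO5

theorem isOrderedAddMonoid (hS : CuO5 S) : IsOrderedAddMonoid S where
  add_le_add_left _ _ h c := hS.addRightMono h c

theorem nsmul_le_add_nsmul_of_add_le (hS : CuO5 S) {f g h : S} (hle : f + h ≤ g + h)
    {n : ℕ} (hn : h ≤ n • g) (m : ℕ) : m • f ≤ (m + n) • g := by
  have := hS.isOrderedAddMonoid
  have hm : m • f + h ≤ m • g + h := by
    induction m with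
    | zero => simp
    | succ m ih =>
      calc (m + 1) • f + h = (m • f + h) + f := by rw [succ_nsmul]; abel
      _ ≤ (m • g + h) + f := add_le_add_left ih f
      _ = m • g + (f + h) := by abel
      _ ≤ m • g + (g + h) := add_le_add_right hle _
      _ = (m + 1) • g + h := by rw [succ_nsmul]; abel
  calc m • f ≤ m • f + h := le_add_of_nonneg_right (hS.zeroLe h)
  _ ≤ m • g + h := hm
  _ ≤ m • g + n • g := add_le_add_right hn _
  _ = (m + n) • g := (add_nsmul g m n).symm

theorem le_of_forall_CC_le (hS : CuO5 S) {f g : S} (H : ∀ f', CC f' f → f' ≤ g) : f ≤ g := by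
  obtain ⟨u, hu, hf⟩ := hS.O2 f
  refine hf.2 ?_
  rintro _ ⟨k, rfl⟩
  exact H _ ((hu k).trans_le (hf.1 ⟨k + 1, rfl⟩))

end CuO5

namespace RealMul

theorem smul_natCast_mul (rm : RealMul S) {c : ℝ≥0∞} (hc : 0 < c) (s : S) {m : ℕ}
    (hm : m ≠ 0) : rm.smul (m * c) s = m • rm.smul c s := by
  induction m, Nat.one_le_iff_ne_zero.2 hm using Nat.le_induction with
  | base => simp
  | succ m hm ih =>
    have hmc : 0 < (m : ℝ≥0∞) * c := ENNReal.mul_pos (by positivity) hc.ne'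
    rw [Nat.cast_succ, add_mul, one_mul, rm.add_left hmc hc, ih (by omega), succ_nsmul]

theorem smul_nsmul (rm : RealMul S) {c : ℝ≥0∞} (hc : 0 < c) (s : S) {m : ℕ} (hm : m ≠ 0) :
    rm.smul c (m • s) = m • rm.smul c s := by
  induction m, Nat.one_le_iff_ne_zero.2 hm using Nat.le_induction with
  | base => simp
  | succ m hm ih => rw [succ_nsmul, rm.add_right hc, ih (by omega), succ_nsmul]

theorem nsmul_smul_natCast_inv (rm : RealMul S) {b : ℕ} (hb : b ≠ 0) (s : S) :
    b • rm.smul (b : ℝ≥0∞)⁻¹ s = s := by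
  rw [← rm.smul_natCast_mul (by simp) s hb, ENNReal.mul_inv_cancel (by simpa) (by simp),
    rm.one_smul]

theorem nsmul_smul_natCast_div (rm : RealMul S) {a b : ℕ} (ha : a ≠ 0) (hb : b ≠ 0) (s : S) :
    b • rm.smul ((a : ℝ≥0∞) / b) s = a • s := by
  rw [div_eq_mul_inv, rm.smul_natCast_mul (by simp) s ha, smul_comm, rm.nsmul_smul_natCast_inv hb]

theorem le_of_nsmul_le_nsmul (rm : RealMul S) {k : ℕ} (hk : k ≠ 0) {s t : S}
    (h : k • s ≤ k • t) : s ≤ t := by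
  have hk' : 0 < (k : ℝ≥0∞)⁻¹ := by simp
  have hinv : ∀ x : S, rm.smul (k : ℝ≥0∞)⁻¹ (k • x) = x := fun x => by
    rw [rm.smul_nsmul hk' x hk, rm.nsmul_smul_natCast_inv hk]
  simpa only [hinv] using rm.mono_right hk' h

theorem isLUB_range_smul_of_tendsto_one (rm : RealMul S) {c : ℕ → ℝ≥0∞} (hc : Monotone c)
    (hc0 : 0 < c 0) (hlim : Tendsto c atTop (𝓝 1)) (s : S) :
    IsLUB (Set.range fun j => rm.smul (c j) s) s := by
  simpa only [iSup_eq_of_tendsto hc hlim, rm.one_smul] using rm.sup_left c hc hc0 s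

theorem exists_succ_nsmul_le_nsmul_of_CC (rm : RealMul S) (hS : CuO5 S) {s' s : S} (h : CC s' s) :
    ∃ a : ℕ, (a + 1) • s' ≤ a • s := by
  have := hS.isOrderedAddMonoid
  set c : ℕ → ℝ≥0 := fun j => ((j + 1 : ℕ) : ℝ≥0) / ((j + 1 : ℕ) + 1)
  have hc : Monotone c := fun i j hij => by
    simp only [c]
    rw [div_le_div_iff₀ (by positivity) (by positivity)]
    exact_mod_cast (show (i + 1) * (j + 1 + 1) ≤ (j + 1) * (i + 1 + 1) by nlinarith)
  have hlim : Tendsto c atTop (𝓝 1) :=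
    (tendsto_natCast_div_add_atTop (1 : ℝ≥0)).comp (tendsto_add_atTop_nat 1)
  have hc' : Monotone fun j => (c j : ℝ≥0∞) := ENNReal.coe_mono.comp hc
  have hc0 : ∀ j, 0 < (c j : ℝ≥0∞) := fun j => by simp [c]
  obtain ⟨j, hj⟩ := h _ (fun i j hij => rm.mono_left (hc0 i) (hc' hij) s) s
    (rm.isLUB_range_smul_of_tendsto_one hc' (hc0 0) (ENNReal.tendsto_coe.2 hlim) s) le_rfl
  refine ⟨j + 1, ?_⟩
  have hcj : (c j : ℝ≥0∞) = ((j + 1 : ℕ) : ℝ≥0∞) / ((j + 1 + 1 : ℕ) : ℝ≥0∞) := by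
    simp only [c]
    rw [ENNReal.coe_div (by positivity)]
    push_cast
    rfl
  calc (j + 1 + 1) • s' ≤ (j + 1 + 1) • rm.smul (c j) s := nsmul_le_nsmul_right hj _
  _ = (j + 1) • s := by rw [hcj, rm.nsmul_smul_natCast_div (by omega) (by omega)]

end RealMul

end

/-- cancellation in an O1-O5 semigroup with real multiplication. -/
theorem cancel_of_prop {S : Type*} [AddCommMonoid S] [PartialOrder S]
    (hS : CuO5 S) (rm : RealMul S) (f g h : S)
    (hle : f + h ≤ g + h) (hprop : ∃ n : ℕ, h ≤ n • g) : f ≤ g := by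
  have := hS.isOrderedAddMonoid
  obtain ⟨n, hn⟩ := hprop
  refine hS.le_of_forall_CC_le fun f' hf' => ?_
  obtain ⟨a, ha⟩ := rm.exists_succ_nsmul_le_nsmul_of_CC hS hf'
  set m := a * n + 1
  refine rm.le_of_nsmul_le_nsmul (k := m * (a + 1)) (by positivity) ?_
  calc (m * (a + 1)) • f' = m • (a + 1) • f' := mul_nsmul' f' m (a + 1)
  _ ≤ m • a • f := nsmul_le_nsmul_right ha m
  _ = a • m • f := smul_comm m a f
  _ ≤ a • (m + n) • g := nsmul_le_nsmul_right (hS.nsmul_le_add_nsmul_of_add_le hle hn m) a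
  _ = (a * (m + n)) • g := (mul_nsmul' g a (m + n)).symm
  _ ≤ (m * (a + 1)) • g := nsmul_le_nsmul_left (hS.zeroLe g) (by simp only [m]; ring_nf; omega)
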